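/- Let t < 0 and let y ∈ (0, −π/t). Then for every x ∈ ℝ with x + y·cot(ty) ≠ 0, the partial derivative of k_t in x satisfies ∂_x k_t(x, y) = −(y·e^{-tx} / ((x + y·cot(ty))²·sin(ty))) · [t·(x + y·cot(ty)) + 1]. Moreover, for y ∈ (0, y_t) one has ∂_x k_t(x_t^+(y), y) ≥ 0 and ∂_x k_t(x_t^−(y), y) ≥ 0. -/

import Mathlib

/-- For `t < 0`, `f_t(y) := 2y·sin(ty) + cos(ty)`. -/
noncomputable def fMap (t y : ℝ) : ℝ :=
  2 * y * Real.sin (t * y) + Real.cos (t * y)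

/-- `v_t(y) := √(1/4 − y² − y·cot(ty))` for `y ≠ 0` and `v_t(0) := √(1/4 − 1/t)`. -/
noncomputable def vMap (t y : ℝ) : ℝ :=
  if y = 0 then Real.sqrt (1 / 4 - 1 / t)
  else Real.sqrt (1 / 4 - y ^ 2 - y * Real.cot (t * y))

/-- `x_t^+(y) := −1/2 + v_t(y)`. -/
noncomputable def xPlus (t y : ℝ) : ℝ := -1 / 2 + vMap t y

/-- `x_t^−(y) := −1/2 − v_t(y)`. -/
noncomputable def xMinus (t y : ℝ) : ℝ := -1 / 2 - vMap t y

/-- `k_t(x, y) := (y/sin(ty)) · e^{-tx} / (y·cot(ty) + x)`. -/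
noncomputable def kMap (t x y : ℝ) : ℝ :=
  y / Real.sin (t * y) * Real.exp (-t * x) / (y * Real.cot (t * y) + x)

lemma kMap_hasDerivAt (t x y : ℝ) (hs : Real.sin (t * y) ≠ 0)
    (hc : y * Real.cot (t * y) + x ≠ 0) :
    HasDerivAt (fun x' => kMap t x' y)
      (-(y * Real.exp (-t * x) /
          ((x + y * Real.cot (t * y)) ^ 2 * Real.sin (t * y))) *
        (t * (x + y * Real.cot (t * y)) + 1)) x := by
  have h1 : HasDerivAt (fun x' : ℝ => -t * x') (-t) x := by
    simpa using (hasDerivAt_id x).const_mul (-t)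
  have h2 : HasDerivAt (fun x' : ℝ => y / Real.sin (t * y) * Real.exp (-t * x'))
      (y / Real.sin (t * y) * (Real.exp (-t * x) * -t)) x := (h1.exp).const_mul _
  have h3 : HasDerivAt (fun x' : ℝ => y * Real.cot (t * y) + x') 1 x := by
    simpa using (hasDerivAt_id x).const_add (y * Real.cot (t * y))
  have h4 : HasDerivAt (fun x' => y / Real.sin (t * y) * Real.exp (-t * x') / (y * Real.cot (t * y) + x')) _ x := h2.div h3 hc
  simp only [kMap]
  convert h4 using 1
  have hx2 : x + y * Real.cot (t * y) ≠ 0 := by intro h; apply hc; linarith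
  field_simp
  ring

lemma sin_neg_of (t y : ℝ) (ht : t < 0) (hy : 0 < y) (hy2 : y < -Real.pi / t) :
    Real.sin (t * y) < 0 := by
  have h1 : t * y < 0 := mul_neg_of_neg_of_pos ht hy
  have htt : t * (-Real.pi / t) = -Real.pi := by
    rw [mul_comm]; exact div_mul_cancel₀ _ (ne_of_lt ht)
  have h2 : -Real.pi < t * y := by
    have h3 := mul_lt_mul_of_neg_left hy2 ht
    linarith
  exact Real.sin_neg_of_neg_of_neg_pi_lt h1 h2

set_option maxHeartbeats 800000 in
lemma kMap_deriv_part2 (t yt y : ℝ) (ht : t < 0)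
    (hyt : IsLeast {y : ℝ | 0 < y ∧ fMap t y = -1} yt)
    (hy1 : 0 < y) (hy2 : y < yt) :
    0 ≤ deriv (fun x' => kMap t x' y) (xPlus t y) ∧
    0 ≤ deriv (fun x' => kMap t x' y) (xMinus t y) := by
    -- yt ≤ -π/t
    have hpit : 0 < -Real.pi / t := by
      rw [neg_div]
      have := div_neg_of_pos_of_neg Real.pi_pos ht
      linarith
    have htpi : t * (-Real.pi / t) = -Real.pi := by
      rw [mul_comm]; exact div_mul_cancel₀ _ (ne_of_lt ht)
    have hytle : yt ≤ -Real.pi / t := by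
      apply hyt.2
      refine ⟨hpit, ?_⟩
      simp [fMap, htpi]
    have hylt : y < -Real.pi / t := lt_of_lt_of_le hy2 hytle
    have hs : Real.sin (t * y) < 0 := sin_neg_of t y ht hy1 hylt
    set s := Real.sin (t * y) with hsdef
    set c0 := Real.cos (t * y) with hc0def
    have hpy : s ^ 2 + c0 ^ 2 = 1 := Real.sin_sq_add_cos_sq (t * y)
    -- fMap t y > -1
    have hfy : -1 < fMap t y := by
      by_contra hcon
      push_neg at hcon
      have hcont : Continuous (fMap t) := by
        unfold fMap; fun_prop
      have hf0 : fMap t 0 = 1 := by simp [fMap]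
      have hivt := intermediate_value_Icc' (le_of_lt hy1) hcont.continuousOn
      have hmem : (-1 : ℝ) ∈ Set.Icc (fMap t y) (fMap t 0) := by
        rw [hf0]; exact ⟨hcon, by norm_num⟩
      obtain ⟨z, hz, hfz⟩ := hivt hmem
      have hz0 : z ≠ 0 := by intro h; rw [h, hf0] at hfz; norm_num at hfz
      have : yt ≤ z := hyt.2 ⟨lt_of_le_of_ne hz.1 (Ne.symm hz0), hfz⟩
      have : z ≤ y := hz.2
      linarith
    have h1 : -1 < 2 * y * s + c0 := by
      simpa [fMap] using hfy
    have hc0lt : c0 < 1 := by nlinarith [sq_nonneg s, mul_neg_of_pos_of_neg hy1 hs]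
    have hA : 0 < 2 * y * s + c0 + 1 := by linarith
    have hB : 2 * y * s + c0 - 1 < 0 := by
      have := mul_neg_of_pos_of_neg hy1 hs
      linarith
    have hAB : (2 * y * s + c0 + 1) * (2 * y * s + c0 - 1) < 0 :=
      mul_neg_of_pos_of_neg hA hB
    have hU : s / 4 - s * y ^ 2 - y * c0 < 0 := by nlinarith [hAB, hpy, hs]
    have hr : 0 < 1 / 4 - y ^ 2 - y * Real.cot (t * y) := by
      rw [Real.cot_eq_cos_div_sin]
      have hT : 1 / 4 - y ^ 2 - y * (c0 / s) =
          (s / 4 - s * y ^ 2 - y * c0) / s := by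
        field_simp [ne_of_lt hs]
      rw [hT]
      exact div_pos_iff.mpr (Or.inr ⟨hU, hs⟩)
    have hv : vMap t y = Real.sqrt (1 / 4 - y ^ 2 - y * Real.cot (t * y)) := by
      simp [vMap, hy1.ne']
    have hv2 : (vMap t y) ^ 2 = 1 / 4 - y ^ 2 - y * Real.cot (t * y) := by
      rw [hv]; exact Real.sq_sqrt hr.le
    set v := vMap t y with hvdef
    have hcplus : y * Real.cot (t * y) + xPlus t y < 0 := by
      unfold xPlus
      rw [← hvdef]
      nlinarith [sq_nonneg (v - 1 / 2), hv2, mul_pos hy1 hy1]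
    have hcminus : y * Real.cot (t * y) + xMinus t y < 0 := by
      unfold xMinus
      rw [← hvdef]
      nlinarith [sq_nonneg (v + 1 / 2), hv2, mul_pos hy1 hy1]
    have key : ∀ x : ℝ, y * Real.cot (t * y) + x < 0 →
        0 ≤ deriv (fun x' => kMap t x' y) x := by
      intro x hcx
      rw [(kMap_hasDerivAt t x y (ne_of_lt hs) (ne_of_lt hcx)).deriv]
      have hxc : x + y * Real.cot (t * y) < 0 := by linarith
      have h2 : 0 < t * (x + y * Real.cot (t * y)) + 1 := by
        have hp := mul_pos (neg_pos.mpr ht) (neg_pos.mpr hxc)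
        have he : -t * -(x + y * Real.cot (t * y)) =
            t * (x + y * Real.cot (t * y)) := by ring
        linarith
      have h4 : 0 < (x + y * Real.cot (t * y)) ^ 2 := by
        nlinarith [mul_pos (neg_pos.mpr hxc) (neg_pos.mpr hxc)]
      have h3 : y * Real.exp (-t * x) / ((x + y * Real.cot (t * y)) ^ 2 * s) < 0 :=
        div_neg_of_pos_of_neg (mul_pos hy1 (Real.exp_pos _))
          (mul_neg_of_pos_of_neg h4 hs)
      exact le_of_lt (mul_pos (neg_pos.mpr h3) h2)
    exact ⟨key _ hcplus, key _ hcminus⟩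

/-- let `t < 0` and `y ∈ (0, −π/t)`. Then for every `x` with
`x + y·cot(ty) ≠ 0`,
`∂_x k_t(x, y) = −(y·e^{-tx}/((x + y·cot(ty))²·sin(ty)))·[t·(x + y·cot(ty)) + 1]`.
Moreover, for `y ∈ (0, y_t)`, `∂_x k_t(x_t^+(y), y) ≥ 0` and `∂_x k_t(x_t^−(y), y) ≥ 0`. -/
theorem kMap_deriv_x (t yt : ℝ) (ht : t < 0)
    (hyt : IsLeast {y : ℝ | 0 < y ∧ fMap t y = -1} yt) :
    (∀ y ∈ Set.Ioo 0 (-Real.pi / t), ∀ x : ℝ, x + y * Real.cot (t * y) ≠ 0 →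
      HasDerivAt (fun x' => kMap t x' y)
        (-(y * Real.exp (-t * x) /
            ((x + y * Real.cot (t * y)) ^ 2 * Real.sin (t * y))) *
          (t * (x + y * Real.cot (t * y)) + 1)) x) ∧
    (∀ y ∈ Set.Ioo 0 yt,
      0 ≤ deriv (fun x' => kMap t x' y) (xPlus t y) ∧
      0 ≤ deriv (fun x' => kMap t x' y) (xMinus t y)) := by
  constructor
  · rintro y ⟨hy1, hy2⟩ x hx
    exact kMap_hasDerivAt t x y (ne_of_lt (sin_neg_of t y ht hy1 hy2))
      (by intro h; apply hx; linarith)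
  · rintro y ⟨hy1, hy2⟩
    exact kMap_deriv_part2 t yt y ht hyt hy1 hy2
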